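/- Let R₄ = {a₀, a₁, a₂, a₃} be the dihedral quandle of order 4 and consider ℤ[R₄]. Set eᵢ = aᵢ − a₀ for i = 1, 2, 3, and define Δ¹ = Δ(R₄) and, for k ≥ 1, Δ^{k+1} = the additive subgroup of ℤ[R₄] generated by all products u·v with (u ∈ Δ^k and v ∈ Δ(R₄)) or (u ∈ Δ(R₄) and v ∈ Δ^k). Then: (1) Δ²(R₄) is the additive subgroup generated by {e₁ − e₂ − e₃, 2e₂}, and Δ(R₄)/Δ²(R₄) ≅ ℤ ⊕ ℤ/2ℤ; (2) for every k ≥ 2, Δ^k(R₄) is the additive subgroup generated by {2^{k−2}(e₁ − e₂ − e₃), 2^{k−1}e₂}, and Δ^k(R₄)/Δ^{k+1}(R₄) ≅ ℤ/2ℤ ⊕ ℤ/2ℤ. -/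

import Mathlib

/-!
Statement 16: For the dihedral quandle `R₄ = ZMod 4` and `ℤ[R₄]`, with `eᵢ = aᵢ − a₀`
(`i = 1, 2, 3`) and powers `Δ¹ = Δ(R₄)`,
`Δ^{k+1} = ⟨u·v | (u ∈ Δ^k, v ∈ Δ) or (u ∈ Δ, v ∈ Δ^k)⟩`:
(1) `Δ²(R₄) = ⟨e₁ − e₂ − e₃, 2e₂⟩` and `Δ(R₄)/Δ²(R₄) ≅ ℤ ⊕ ℤ/2ℤ`;
(2) for all `k ≥ 2`, `Δ^k(R₄) = ⟨2^{k−2}(e₁ − e₂ − e₃), 2^{k−1}e₂⟩` and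
`Δ^k(R₄)/Δ^{k+1}(R₄) ≅ ℤ/2ℤ ⊕ ℤ/2ℤ`.

Here `dPow op j` denotes `Δ^{j+1}`, so part (2) is stated for all `j = k − 2 ≥ 0`.
-/

variable {X : Type*}

/-- Multiplication on the free module `X →₀ ℤ` induced by a binary operation on `X`. -/
noncomputable def qmul (op : X → X → X) (u v : X →₀ ℤ) : X →₀ ℤ :=
  u.sum fun x a => v.sum fun y b => Finsupp.single (op x y) (a * b)

/-- The augmentation homomorphism `ℤ[X] → ℤ`. -/
noncomputable def augHom : (X →₀ ℤ) →+ ℤ :=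
  Finsupp.liftAddHom fun _ => AddMonoidHom.id ℤ

/-- The augmentation ideal `Δ(X)` of `ℤ[X]`, as an additive subgroup. -/
noncomputable def augKer (X : Type*) : AddSubgroup (X →₀ ℤ) := augHom.ker

/-- `dPow op j = Δ^{j+1}(X)`: `dPow op 0 = Δ(X)` and `Δ^{k+1}` is the additive subgroup
generated by products `u·v` with `u ∈ Δ^k, v ∈ Δ` or `u ∈ Δ, v ∈ Δ^k`. -/
noncomputable def dPow (op : X → X → X) : ℕ → AddSubgroup (X →₀ ℤ)
  | 0 => augKer X
  | k + 1 => AddSubgroup.closure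
      {w | ∃ u v : X →₀ ℤ, w = qmul op u v ∧
        ((u ∈ dPow op k ∧ v ∈ augKer X) ∨ (u ∈ augKer X ∧ v ∈ dPow op k))}

/-- The dihedral quandle operation on `ZMod n`: `aᵢ·aⱼ = a_{2j−i}`. -/
def dihedralOp (n : ℕ) : ZMod n → ZMod n → ZMod n := fun a b => 2 * b - a

section Aux

noncomputable def qmulHom (op : X → X → X) : (X →₀ ℤ) →+ (X →₀ ℤ) →+ (X →₀ ℤ) :=
  Finsupp.liftAddHom fun x => (zmultiplesHom _)
    (Finsupp.liftAddHom fun y => Finsupp.singleAddHom (op x y))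

lemma qmul_eq (op : X → X → X) (u v : X →₀ ℤ) : qmul op u v = qmulHom op u v := by
  rw [qmul, qmulHom, Finsupp.liftAddHom_apply]
  rw [Finsupp.sum, Finsupp.sum, AddMonoidHom.finset_sum_apply]
  refine Finset.sum_congr rfl fun x _ => ?_
  simp only [zmultiplesHom_apply, AddMonoidHom.smul_apply, Finsupp.liftAddHom_apply]
  rw [Finsupp.smul_sum]
  refine Finset.sum_congr rfl fun y _ => ?_
  simp [Finsupp.smul_single, smul_eq_mul, mul_comm]

lemma qmul_single_single (op : X → X → X) (x y : X) (a b : ℤ) :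
    qmul op (Finsupp.single x a) (Finsupp.single y b) = Finsupp.single (op x y) (a * b) := by
  rw [qmul]
  rw [Finsupp.sum_single_index (by simp [Finsupp.sum_single_index])]
  rw [Finsupp.sum_single_index (by simp)]

open AddSubgroup in
lemma qmul_mem_closure (op : X → X → X) (S T : Set (X →₀ ℤ)) {u v : X →₀ ℤ}
    (hu : u ∈ closure S) (hv : v ∈ closure T) :
    qmul op u v ∈ closure {w | ∃ s ∈ S, ∃ t ∈ T, w = qmul op s t} := by
  set C := closure {w | ∃ s ∈ S, ∃ t ∈ T, w = qmul op s t} with hC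
  rw [qmul_eq]
  induction hu using AddSubgroup.closure_induction with
  | mem s hs =>
    induction hv using AddSubgroup.closure_induction with
    | mem t ht => exact subset_closure ⟨s, hs, t, ht, (qmul_eq op s t).symm⟩
    | zero => simpa using C.zero_mem
    | add a b _ _ ha hb => rw [map_add]; exact C.add_mem ha hb
    | neg a _ ha => rw [map_neg]; exact C.neg_mem ha
  | zero => simpa using C.zero_mem
  | add a b _ _ ha hb => rw [map_add, AddMonoidHom.add_apply]; exact C.add_mem ha hb
  | neg a _ ha => rw [map_neg, AddMonoidHom.neg_apply]; exact C.neg_mem ha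


lemma qmul_sub_left (op : X → X → X) (u u' v : X →₀ ℤ) :
    qmul op (u - u') v = qmul op u v - qmul op u' v := by
  simp [qmul_eq, map_sub]

lemma qmul_sub_right (op : X → X → X) (u v v' : X →₀ ℤ) :
    qmul op u (v - v') = qmul op u v - qmul op u v' := by
  simp [qmul_eq, map_sub]

lemma qmul_smul_left (op : X → X → X) (n : ℤ) (u v : X →₀ ℤ) :
    qmul op (n • u) v = n • qmul op u v := by
  simp [qmul_eq, map_zsmul]

lemma qmul_smul_right (op : X → X → X) (n : ℤ) (u v : X →₀ ℤ) :
    qmul op u (n • v) = n • qmul op u v := by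
  simp [qmul_eq, map_zsmul]

open AddSubgroup in
lemma dPow_succ_closure (op : X → X → X) (k : ℕ) (S T : Set (X →₀ ℤ))
    (hk : dPow op k = closure S) (hT : augKer X = closure T) :
    dPow op (k + 1) = closure ({w | ∃ s ∈ S, ∃ t ∈ T, w = qmul op s t} ∪
      {w | ∃ t ∈ T, ∃ s ∈ S, w = qmul op t s}) := by
  apply le_antisymm
  · rw [dPow]
    apply (closure_le _).2
    rintro w ⟨u, v, rfl, (⟨hu, hv⟩ | ⟨hu, hv⟩)⟩
    · exact closure_mono Set.subset_union_left
        (qmul_mem_closure op S T (hk ▸ hu) (hT ▸ hv))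
    · exact closure_mono Set.subset_union_right
        (qmul_mem_closure op T S (hT ▸ hu) (hk ▸ hv))
  · apply (closure_le _).2
    rintro w (⟨s, hs, t, ht, rfl⟩ | ⟨t, ht, s, hs, rfl⟩) <;> rw [dPow]
    · exact subset_closure ⟨s, t, rfl, Or.inl ⟨hk.symm ▸ subset_closure hs,
        hT.symm ▸ subset_closure ht⟩⟩
    · exact subset_closure ⟨t, s, rfl, Or.inr ⟨hT.symm ▸ subset_closure ht,
        hk.symm ▸ subset_closure hs⟩⟩

noncomputable def E (i : ZMod 4) : ZMod 4 →₀ ℤ := Finsupp.single i 1 - Finsupp.single 0 1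

noncomputable def G : ZMod 4 →₀ ℤ := E 1 - E 2 - E 3

lemma augHom_single (x : ZMod 4) (a : ℤ) : augHom (Finsupp.single x a) = a := by
  simp [augHom]

lemma augHom_apply (u : ZMod 4 →₀ ℤ) : augHom u = u 0 + u 1 + u 2 + u 3 := by
  rw [augHom, Finsupp.liftAddHom_apply]
  rw [Finsupp.sum_fintype _ _ (fun _ => rfl)]
  have : (Finset.univ : Finset (ZMod 4)) = {0, 1, 2, 3} := by decide
  rw [this]
  simp only [AddMonoidHom.id_apply]
  rw [Finset.sum_insert (by decide), Finset.sum_insert (by decide),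
    Finset.sum_insert (by decide), Finset.sum_singleton]
  ring

lemma zmod4_cases : ∀ i : ZMod 4, i = 0 ∨ i = 1 ∨ i = 2 ∨ i = 3 := by decide

open AddSubgroup in
lemma augKer_eq : augKer (ZMod 4) = closure {E 1, E 2, E 3} := by
  apply le_antisymm
  · intro u hu
    have h0 : augHom u = 0 := hu
    rw [augHom_apply] at h0
    have hrep : u = (u 1) • E 1 + (u 2) • E 2 + (u 3) • E 3 := by
      ext i
      rcases zmod4_cases i with rfl | rfl | rfl | rfl <;>
        simp (config := { decide := true }) [E, Finsupp.single_apply] <;> omega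
    rw [hrep]
    refine add_mem (add_mem (zsmul_mem (subset_closure ?_) _)
      (zsmul_mem (subset_closure ?_) _)) (zsmul_mem (subset_closure ?_) _) <;> simp
  · refine (closure_le _).2 ?_
    rintro w (rfl | rfl | rfl) <;>
      simp [augKer, AddMonoidHom.mem_ker, E, map_sub, augHom_single]

lemma qmul_E (i j : ZMod 4) :
    qmul (dihedralOp 4) (E i) (E j) = E (2*j - i) - E (2*j) - E (-i) := by
  simp only [E]
  rw [show (Finsupp.single i 1 - Finsupp.single 0 1 : ZMod 4 →₀ ℤ) =
    Finsupp.single i 1 - Finsupp.single 0 1 from rfl]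
  rw [qmul_sub_left, qmul_sub_right, qmul_sub_right,
    qmul_single_single, qmul_single_single, qmul_single_single, qmul_single_single]
  simp only [dihedralOp, mul_zero, zero_sub, sub_zero, mul_one]
  abel

lemma i4 : (4:ZMod 4) = 0 := by decide
lemma i5 : (5:ZMod 4) = 1 := by decide
lemma i6 : (6:ZMod 4) = 2 := by decide
lemma im1 : (-1:ZMod 4) = 3 := by decide
lemma im2 : (-2:ZMod 4) = 2 := by decide
lemma im3 : (-3:ZMod 4) = 1 := by decide
lemma E0 : E 0 = 0 := by simp [E]

lemma P11 : qmul (dihedralOp 4) (E 1) (E 1) = G := by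
  rw [qmul_E, G]; norm_num; simp only [i4,i5,i6,im1,im2,im3,E0]; all_goals abel
lemma P12 : qmul (dihedralOp 4) (E 1) (E 2) = 0 := by
  rw [qmul_E]; norm_num; simp only [i4,i5,i6,im1,im2,im3,E0]; all_goals abel
lemma P13 : qmul (dihedralOp 4) (E 1) (E 3) = G := by
  rw [qmul_E, G]; norm_num; simp only [i4,i5,i6,im1,im2,im3,E0]; all_goals abel
lemma P21 : qmul (dihedralOp 4) (E 2) (E 1) = -((2:ℤ) • E 2) := by
  rw [qmul_E]; norm_num; simp only [i4,i5,i6,im1,im2,im3,E0]; all_goals abel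
lemma P22 : qmul (dihedralOp 4) (E 2) (E 2) = 0 := by
  rw [qmul_E]; norm_num; simp only [i4,i5,i6,im1,im2,im3,E0]; all_goals abel
lemma P23 : qmul (dihedralOp 4) (E 2) (E 3) = -((2:ℤ) • E 2) := by
  rw [qmul_E]; norm_num; simp only [i4,i5,i6,im1,im2,im3,E0]; all_goals abel
lemma P31 : qmul (dihedralOp 4) (E 3) (E 1) = -G - (2:ℤ) • E 2 := by
  rw [qmul_E, G]; norm_num; simp only [i4,i5,i6,im1,im2,im3,E0]; all_goals abel
lemma P32 : qmul (dihedralOp 4) (E 3) (E 2) = 0 := by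
  rw [qmul_E]; norm_num; simp only [i4,i5,i6,im1,im2,im3,E0]; all_goals abel
lemma P33 : qmul (dihedralOp 4) (E 3) (E 3) = -G - (2:ℤ) • E 2 := by
  rw [qmul_E, G]; norm_num; simp only [i4,i5,i6,im1,im2,im3,E0]; all_goals abel

lemma Q1 : qmul (dihedralOp 4) G (E 1) = (2:ℤ) • G + (4:ℤ) • E 2 := by
  rw [G, qmul_sub_left, qmul_sub_left, P11, P21, P31]; simp only [G]; abel
lemma Q2 : qmul (dihedralOp 4) G (E 2) = 0 := by
  rw [G, qmul_sub_left, qmul_sub_left, P12, P22, P32]; abel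
lemma Q3 : qmul (dihedralOp 4) G (E 3) = (2:ℤ) • G + (4:ℤ) • E 2 := by
  rw [G, qmul_sub_left, qmul_sub_left, P13, P23, P33]; simp only [G]; abel
lemma R1 : qmul (dihedralOp 4) (E 1) G = 0 := by
  rw [G, qmul_sub_right, qmul_sub_right, P11, P12, P13]; abel
lemma R2 : qmul (dihedralOp 4) (E 2) G = 0 := by
  rw [G, qmul_sub_right, qmul_sub_right, P21, P22, P23]; abel
lemma R3 : qmul (dihedralOp 4) (E 3) G = 0 := by
  rw [G, qmul_sub_right, qmul_sub_right, P31, P32, P33]; abel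

lemma dPow_zero_eq : dPow (dihedralOp 4) 0 = AddSubgroup.closure {E 1, E 2, E 3} := by
  rw [dPow]; exact augKer_eq

open AddSubgroup in
lemma prod_mem_GH (s t : ZMod 4 →₀ ℤ) (hs : s ∈ ({E 1, E 2, E 3} : Set (ZMod 4 →₀ ℤ)))
    (ht : t ∈ ({E 1, E 2, E 3} : Set (ZMod 4 →₀ ℤ))) :
    qmul (dihedralOp 4) s t ∈ closure {G, (2:ℤ) • E 2} := by
  simp only [Set.mem_insert_iff, Set.mem_singleton_iff] at hs ht
  rcases hs with rfl | rfl | rfl <;> rcases ht with rfl | rfl | rfl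
  · rw [P11]; exact subset_closure (Set.mem_insert _ _)
  · rw [P12]; exact zero_mem _
  · rw [P13]; exact subset_closure (Set.mem_insert _ _)
  · rw [P21]; exact neg_mem (subset_closure (Set.mem_insert_of_mem _ rfl))
  · rw [P22]; exact zero_mem _
  · rw [P23]; exact neg_mem (subset_closure (Set.mem_insert_of_mem _ rfl))
  · rw [P31]
    exact sub_mem (neg_mem (subset_closure (Set.mem_insert _ _)))
      (subset_closure (Set.mem_insert_of_mem _ rfl))
  · rw [P32]; exact zero_mem _
  · rw [P33]
    exact sub_mem (neg_mem (subset_closure (Set.mem_insert _ _)))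
      (subset_closure (Set.mem_insert_of_mem _ rfl))

open AddSubgroup in
lemma dpow1 : dPow (dihedralOp 4) 1 = closure {G, (2:ℤ) • E 2} := by
  rw [dPow_succ_closure (dihedralOp 4) 0 {E 1, E 2, E 3} {E 1, E 2, E 3} dPow_zero_eq augKer_eq]
  apply le_antisymm
  · refine (closure_le _).2 ?_
    rintro w (⟨s, hs, t, ht, rfl⟩ | ⟨s, hs, t, ht, rfl⟩) <;> exact prod_mem_GH s t hs ht
  · refine (closure_le _).2 ?_
    rintro w (rfl | rfl)
    · exact subset_closure (Or.inl ⟨E 1, by simp, E 1, by simp, P11.symm⟩)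
    · have h : (2:ℤ) • E 2 = -(qmul (dihedralOp 4) (E 2) (E 1)) := by rw [P21]; simp
      rw [h]
      exact neg_mem (subset_closure (Or.inl ⟨E 2, by simp, E 1, by simp, rfl⟩))

open AddSubgroup in
lemma step_prod_mem (j : ℕ) (s t : ZMod 4 →₀ ℤ)
    (hs : s ∈ ({(2:ℤ)^j • G, (2:ℤ)^(j+1) • E 2} : Set (ZMod 4 →₀ ℤ)))
    (ht : t ∈ ({E 1, E 2, E 3} : Set (ZMod 4 →₀ ℤ))) :
    qmul (dihedralOp 4) s t ∈ closure {(2:ℤ)^(j+1) • G, (2:ℤ)^(j+2) • E 2} := by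
  simp only [Set.mem_insert_iff, Set.mem_singleton_iff] at hs ht
  have hA : (2:ℤ)^j • ((2:ℤ) • G + (4:ℤ) • E 2) =
      (2:ℤ)^(j+1) • G + (2:ℤ)^(j+2) • E 2 := by
    rw [smul_add, smul_smul, smul_smul, pow_succ, pow_succ, pow_succ]; try ring_nf
  have hB : (2:ℤ)^(j+1) • (-((2:ℤ) • E 2)) = -((2:ℤ)^(j+2) • E 2) := by
    rw [smul_neg, smul_smul, pow_succ, pow_succ, pow_succ]; try ring_nf
  rcases hs with rfl | rfl <;> rcases ht with rfl | rfl | rfl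
  · rw [qmul_smul_left, Q1, hA]
    exact add_mem (subset_closure (Set.mem_insert _ _))
      (subset_closure (Set.mem_insert_of_mem _ rfl))
  · rw [qmul_smul_left, Q2, smul_zero]; exact zero_mem _
  · rw [qmul_smul_left, Q3, hA]
    exact add_mem (subset_closure (Set.mem_insert _ _))
      (subset_closure (Set.mem_insert_of_mem _ rfl))
  · rw [qmul_smul_left, P21, hB]
    exact neg_mem (subset_closure (Set.mem_insert_of_mem _ rfl))
  · rw [qmul_smul_left, P22, smul_zero]; exact zero_mem _
  · rw [qmul_smul_left, P23, hB]
    exact neg_mem (subset_closure (Set.mem_insert_of_mem _ rfl))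

open AddSubgroup in
lemma step_prod_mem' (j : ℕ) (t s : ZMod 4 →₀ ℤ)
    (ht : t ∈ ({E 1, E 2, E 3} : Set (ZMod 4 →₀ ℤ)))
    (hs : s ∈ ({(2:ℤ)^j • G, (2:ℤ)^(j+1) • E 2} : Set (ZMod 4 →₀ ℤ))) :
    qmul (dihedralOp 4) t s ∈ closure {(2:ℤ)^(j+1) • G, (2:ℤ)^(j+2) • E 2} := by
  simp only [Set.mem_insert_iff, Set.mem_singleton_iff] at hs ht
  rcases ht with rfl | rfl | rfl <;> rcases hs with rfl | rfl <;>
    simp only [qmul_smul_right, R1, R2, R3, P12, P22, P32, smul_zero] <;> exact zero_mem _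

open AddSubgroup in
lemma dpow_eq (j : ℕ) :
    dPow (dihedralOp 4) (j+1) = closure {(2:ℤ)^j • G, (2:ℤ)^(j+1) • E 2} := by
  induction j with
  | zero => rw [dpow1]; norm_num
  | succ j ih =>
    rw [dPow_succ_closure (dihedralOp 4) (j+1) _ {E 1, E 2, E 3} ih augKer_eq]
    apply le_antisymm
    · refine (closure_le _).2 ?_
      rintro w (⟨s, hs, t, ht, rfl⟩ | ⟨t, ht, s, hs, rfl⟩)
      · exact step_prod_mem j s t hs ht
      · exact step_prod_mem' j t s ht hs
    · have h1 : qmul (dihedralOp 4) ((2:ℤ)^j • G) (E 1) =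
          (2:ℤ)^(j+1) • G + (2:ℤ)^(j+2) • E 2 := by
        rw [qmul_smul_left, Q1, smul_add, smul_smul, smul_smul,
          pow_succ, pow_succ, pow_succ]; try ring_nf
      have h2 : qmul (dihedralOp 4) ((2:ℤ)^(j+1) • E 2) (E 1) = -((2:ℤ)^(j+2) • E 2) := by
        rw [qmul_smul_left, P21, smul_neg, smul_smul, pow_succ, pow_succ, pow_succ]; try ring_nf
      refine (closure_le _).2 ?_
      rintro w (rfl | rfl)
      · have key : (2:ℤ)^(j+1) • G = qmul (dihedralOp 4) ((2:ℤ)^j • G) (E 1) +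
            qmul (dihedralOp 4) ((2:ℤ)^(j+1) • E 2) (E 1) := by rw [h1, h2]; abel
        rw [key]
        exact add_mem
          (subset_closure (Or.inl ⟨_, Set.mem_insert _ _, _, Set.mem_insert _ _, rfl⟩))
          (subset_closure (Or.inl ⟨_, Set.mem_insert_of_mem _ rfl, _, Set.mem_insert _ _, rfl⟩))
      · have key : (2:ℤ)^(j+2) • E 2 = -(qmul (dihedralOp 4) ((2:ℤ)^(j+1) • E 2) (E 1)) := by
          rw [h2]; simp
        rw [key]
        exact neg_mem
          (subset_closure (Or.inl ⟨_, Set.mem_insert_of_mem _ rfl, _, Set.mem_insert _ _, rfl⟩))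

noncomputable def psi : (ZMod 4 →₀ ℤ) →+ ℤ × ZMod 2 where
  toFun u := (u 1 + u 3, ((u 1 + u 2 : ℤ) : ZMod 2))
  map_zero' := by simp
  map_add' u v := by
    simp only [Finsupp.add_apply, Prod.mk_add_mk, Prod.mk.injEq]
    constructor
    · ring
    · push_cast; ring

lemma psi_G : psi G = 0 := by
  simp (config := { decide := true }) only [psi, AddMonoidHom.coe_mk, ZeroHom.coe_mk, G, E,
    Finsupp.sub_apply, Finsupp.single_apply, if_pos, if_neg]

lemma psi_2E2 : psi ((2:ℤ) • E 2) = 0 := by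
  simp (config := { decide := true }) only [psi, AddMonoidHom.coe_mk, ZeroHom.coe_mk, E,
    Finsupp.smul_apply, Finsupp.sub_apply, Finsupp.single_apply, if_pos, if_neg]

open AddSubgroup QuotientAddGroup in
lemma iso1 : Nonempty ((↥(dPow (dihedralOp 4) 0) ⧸
    (dPow (dihedralOp 4) 1).addSubgroupOf (dPow (dihedralOp 4) 0)) ≃+ (ℤ × ZMod 2)) := by
  set φ := psi.comp (dPow (dihedralOp 4) 0).subtype with hφ
  have hvals : ∀ u : ZMod 4 →₀ ℤ, psi u = (u 1 + u 3, ((u 1 + u 2 : ℤ) : ZMod 2)) :=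
    fun u => rfl
  have hsurj : Function.Surjective φ := by
    rintro ⟨n, z⟩
    have hmem : n • E 3 + (z.val : ℤ) • E 2 ∈ dPow (dihedralOp 4) 0 := by
      rw [dPow_zero_eq]
      exact add_mem (zsmul_mem (subset_closure (by simp)) _)
        (zsmul_mem (subset_closure (by simp)) _)
    refine ⟨⟨n • E 3 + (z.val : ℤ) • E 2, hmem⟩, ?_⟩
    show psi (n • E 3 + (z.val : ℤ) • E 2) = (n, z)
    have c1 : (n • E 3 + (z.val : ℤ) • E 2) 1 = 0 := by
      simp (config := { decide := true }) only [E, Finsupp.add_apply, Finsupp.smul_apply,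
        Finsupp.sub_apply, Finsupp.single_apply, smul_eq_mul, if_true, if_false]
      ring
    have c2 : (n • E 3 + (z.val : ℤ) • E 2) 2 = (z.val : ℤ) := by
      simp (config := { decide := true }) only [E, Finsupp.add_apply, Finsupp.smul_apply,
        Finsupp.sub_apply, Finsupp.single_apply, smul_eq_mul, if_true, if_false]
      ring
    have c3 : (n • E 3 + (z.val : ℤ) • E 2) 3 = n := by
      simp (config := { decide := true }) only [E, Finsupp.add_apply, Finsupp.smul_apply,
        Finsupp.sub_apply, Finsupp.single_apply, smul_eq_mul, if_true, if_false]
      ring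
    rw [hvals, c1, c2, c3]
    refine Prod.ext (by simp) ?_
    show (((0 : ℤ) + (z.val : ℤ) : ℤ) : ZMod 2) = z
    push_cast [ZMod.natCast_val, ZMod.cast_id]
    ring
  have hker : (dPow (dihedralOp 4) 1).addSubgroupOf (dPow (dihedralOp 4) 0) = φ.ker := by
    ext x
    obtain ⟨u, hu⟩ := x
    rw [AddSubgroup.mem_addSubgroupOf, AddMonoidHom.mem_ker]
    have hφx : φ ⟨u, hu⟩ = psi u := rfl
    constructor
    · intro h
      rw [dpow1] at h
      obtain ⟨m, n, hmn⟩ := (mem_closure_pair).1 h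
      have hmn' : m • G + n • ((2:ℤ) • E 2) = u := hmn
      rw [hφx, ← hmn', map_add, map_zsmul, map_zsmul, psi_G, psi_2E2]
      simp
    · intro h
      rw [hφx, hvals, Prod.mk_eq_zero] at h
      obtain ⟨h1, h2⟩ := h
      have h2' : (2:ℤ) ∣ u 1 + u 2 := by
        have := (ZMod.intCast_zmod_eq_zero_iff_dvd (u 1 + u 2) 2).1 h2
        exact_mod_cast this
      obtain ⟨m, hm⟩ := h2'
      have h0 : augHom u = 0 := hu
      rw [augHom_apply] at h0
      have hrep : u = (u 1) • G + m • ((2:ℤ) • E 2) := by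
        ext i
        rcases zmod4_cases i with rfl | rfl | rfl | rfl <;>
          simp (config := { decide := true }) [G, E, Finsupp.single_apply] <;> omega
      rw [dpow1]
      exact (mem_closure_pair).2 ⟨u 1, m, hrep.symm⟩
  exact ⟨(quotientAddEquivOfEq hker).trans (quotientKerEquivOfSurjective φ hsurj)⟩

lemma comb1 (j : ℕ) (s t : ℤ) :
    (s • ((2:ℤ)^j • G) + t • ((2:ℤ)^(j+1) • E 2)) 1 = s * 2^j := by
  simp (config := { decide := true }) only [G, E, Finsupp.add_apply, Finsupp.smul_apply,
    Finsupp.sub_apply, Finsupp.single_apply, smul_eq_mul, if_true, if_false]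
  ring

lemma comb12 (j : ℕ) (s t : ℤ) :
    (s • ((2:ℤ)^j • G) + t • ((2:ℤ)^(j+1) • E 2)) 1 +
      (s • ((2:ℤ)^j • G) + t • ((2:ℤ)^(j+1) • E 2)) 2 = t * 2^(j+1) := by
  simp (config := { decide := true }) only [G, E, Finsupp.add_apply, Finsupp.smul_apply,
    Finsupp.sub_apply, Finsupp.single_apply, smul_eq_mul, if_true, if_false]
  ring

open AddSubgroup in
lemma mem_repr (j : ℕ) {u : ZMod 4 →₀ ℤ} (hu : u ∈ dPow (dihedralOp 4) (j+1)) :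
    ∃ s t : ℤ, u = s • ((2:ℤ)^j • G) + t • ((2:ℤ)^(j+1) • E 2) ∧
      u 1 = s * 2^j ∧ u 1 + u 2 = t * 2^(j+1) := by
  rw [dpow_eq j] at hu
  obtain ⟨s, t, h⟩ := mem_closure_pair.1 hu
  exact ⟨s, t, h.symm, by rw [← h]; exact comb1 j s t, by rw [← h]; exact comb12 j s t⟩

open AddSubgroup QuotientAddGroup in
lemma iso2 (j : ℕ) : Nonempty ((↥(dPow (dihedralOp 4) (j+1)) ⧸
    (dPow (dihedralOp 4) (j+2)).addSubgroupOf (dPow (dihedralOp 4) (j+1))) ≃+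
      (ZMod 2 × ZMod 2)) := by
  have p2 : ((2:ℤ)^j) ≠ 0 := pow_ne_zero _ two_ne_zero
  have p2' : ((2:ℤ)^(j+1)) ≠ 0 := pow_ne_zero _ two_ne_zero
  let φ : ↥(dPow (dihedralOp 4) (j+1)) →+ ZMod 2 × ZMod 2 :=
  { toFun := fun u => ((((u : ZMod 4 →₀ ℤ) 1 / 2^j : ℤ) : ZMod 2),
      ((((u : ZMod 4 →₀ ℤ) 1 + (u : ZMod 4 →₀ ℤ) 2) / 2^(j+1) : ℤ) : ZMod 2))
    map_zero' := by simp
    map_add' := fun u v => by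
      obtain ⟨s, t, -, h1, h2⟩ := mem_repr j u.2
      obtain ⟨s', t', -, h1', h2'⟩ := mem_repr j v.2
      have k1 : ((u + v : ↥(dPow (dihedralOp 4) (j+1))) : ZMod 4 →₀ ℤ) 1 = (s + s') * 2^j := by
        rw [AddSubgroup.coe_add, Finsupp.add_apply, h1, h1']; ring
      have k2 : ((u + v : ↥(dPow (dihedralOp 4) (j+1))) : ZMod 4 →₀ ℤ) 1 +
          ((u + v : ↥(dPow (dihedralOp 4) (j+1))) : ZMod 4 →₀ ℤ) 2 = (t + t') * 2^(j+1) := by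
        rw [AddSubgroup.coe_add, Finsupp.add_apply, Finsupp.add_apply]
        have : (t + t') * 2^(j+1) = t * 2^(j+1) + t' * 2^(j+1) := by ring
        rw [this, ← h2, ← h2']; ring
      refine Prod.ext ?_ ?_
      · show ((((u + v : ↥(dPow (dihedralOp 4) (j+1))) : ZMod 4 →₀ ℤ) 1 / 2^j : ℤ) : ZMod 2) =
          (((u : ZMod 4 →₀ ℤ) 1 / 2^j : ℤ) : ZMod 2) +
            (((v : ZMod 4 →₀ ℤ) 1 / 2^j : ℤ) : ZMod 2)
        rw [k1, h1, h1', Int.mul_ediv_cancel _ p2, Int.mul_ediv_cancel _ p2,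
          Int.mul_ediv_cancel _ p2]
        push_cast; ring
      · show (((((u + v : ↥(dPow (dihedralOp 4) (j+1))) : ZMod 4 →₀ ℤ) 1 +
            ((u + v : ↥(dPow (dihedralOp 4) (j+1))) : ZMod 4 →₀ ℤ) 2) / 2^(j+1) : ℤ) : ZMod 2) =
          ((((u : ZMod 4 →₀ ℤ) 1 + (u : ZMod 4 →₀ ℤ) 2) / 2^(j+1) : ℤ) : ZMod 2) +
            ((((v : ZMod 4 →₀ ℤ) 1 + (v : ZMod 4 →₀ ℤ) 2) / 2^(j+1) : ℤ) : ZMod 2)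
        rw [k2, h2, h2', Int.mul_ediv_cancel _ p2', Int.mul_ediv_cancel _ p2',
          Int.mul_ediv_cancel _ p2']
        push_cast; ring }
  have hφdef : ∀ x : ↥(dPow (dihedralOp 4) (j+1)), φ x =
      ((((x : ZMod 4 →₀ ℤ) 1 / 2^j : ℤ) : ZMod 2),
        ((((x : ZMod 4 →₀ ℤ) 1 + (x : ZMod 4 →₀ ℤ) 2) / 2^(j+1) : ℤ) : ZMod 2)) :=
    fun _ => rfl
  have hsurj : Function.Surjective φ := by
    rintro ⟨x, y⟩
    have hw : (x.val : ℤ) • ((2:ℤ)^j • G) + (y.val : ℤ) • ((2:ℤ)^(j+1) • E 2) ∈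
        dPow (dihedralOp 4) (j+1) := by
      rw [dpow_eq j]; exact mem_closure_pair.2 ⟨_, _, rfl⟩
    refine ⟨⟨_, hw⟩, ?_⟩
    rw [hφdef]
    have hc : ((⟨_, hw⟩ : ↥(dPow (dihedralOp 4) (j+1))) : ZMod 4 →₀ ℤ) =
        (x.val : ℤ) • ((2:ℤ)^j • G) + (y.val : ℤ) • ((2:ℤ)^(j+1) • E 2) := rfl
    rw [hc, comb12 j, comb1 j, Int.mul_ediv_cancel _ p2, Int.mul_ediv_cancel _ p2']
    refine Prod.ext ?_ ?_ <;> push_cast [ZMod.natCast_val, ZMod.cast_id] <;> rfl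
  have hker : (dPow (dihedralOp 4) (j+2)).addSubgroupOf (dPow (dihedralOp 4) (j+1)) =
      φ.ker := by
    ext x
    obtain ⟨u, hu⟩ := x
    rw [AddSubgroup.mem_addSubgroupOf, AddMonoidHom.mem_ker]
    have hc : ((⟨u, hu⟩ : ↥(dPow (dihedralOp 4) (j+1))) : ZMod 4 →₀ ℤ) = u := rfl
    rw [hφdef, hc]
    constructor
    · intro h
      obtain ⟨p, q, -, h1, h2⟩ := mem_repr (j+1) h
      have d1 : u 1 / 2^j = p * 2 := by
        rw [h1, show p * 2^(j+1) = (p*2) * 2^j by ring, Int.mul_ediv_cancel _ p2]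
      have d2 : (u 1 + u 2) / 2^(j+1) = q * 2 := by
        rw [h2, show q * 2^(j+2) = (q*2) * 2^(j+1) by ring, Int.mul_ediv_cancel _ p2']
      rw [d1, d2]
      refine Prod.ext ?_ ?_ <;>
        exact (ZMod.intCast_zmod_eq_zero_iff_dvd _ 2).2 ⟨_, by ring⟩
    · intro h
      obtain ⟨s, t, hrep, h1, h2⟩ := mem_repr j hu
      have e1 : ((u 1 / 2^j : ℤ) : ZMod 2) = 0 := congrArg Prod.fst h
      have e2 : (((u 1 + u 2) / 2^(j+1) : ℤ) : ZMod 2) = 0 := congrArg Prod.snd h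
      rw [h1, Int.mul_ediv_cancel _ p2] at e1
      rw [h2, Int.mul_ediv_cancel _ p2'] at e2
      obtain ⟨s', rfl⟩ : (2:ℤ) ∣ s := (ZMod.intCast_zmod_eq_zero_iff_dvd s 2).1 e1
      obtain ⟨t', rfl⟩ : (2:ℤ) ∣ t := (ZMod.intCast_zmod_eq_zero_iff_dvd t 2).1 e2
      rw [dpow_eq (j+1)]
      refine mem_closure_pair.2 ⟨s', t', ?_⟩
      rw [hrep]
      module
  exact ⟨(quotientAddEquivOfEq hker).trans (quotientKerEquivOfSurjective φ hsurj)⟩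

end Aux

theorem stmt_16 :
    let e₁ : ZMod 4 →₀ ℤ := Finsupp.single 1 1 - Finsupp.single 0 1
    let e₂ : ZMod 4 →₀ ℤ := Finsupp.single 2 1 - Finsupp.single 0 1
    let e₃ : ZMod 4 →₀ ℤ := Finsupp.single 3 1 - Finsupp.single 0 1
    -- (1)
    (dPow (dihedralOp 4) 1 = AddSubgroup.closure {e₁ - e₂ - e₃, (2 : ℤ) • e₂} ∧
      Nonempty
        ((↥(dPow (dihedralOp 4) 0) ⧸
            (dPow (dihedralOp 4) 1).addSubgroupOf (dPow (dihedralOp 4) 0)) ≃+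
          (ℤ × ZMod 2))) ∧
    -- (2): for `k = j + 2 ≥ 2`, `Δ^k = dPow (j + 1)`
    ∀ j : ℕ,
      dPow (dihedralOp 4) (j + 1) =
        AddSubgroup.closure {(2 : ℤ) ^ j • (e₁ - e₂ - e₃), (2 : ℤ) ^ (j + 1) • e₂} ∧
      Nonempty
        ((↥(dPow (dihedralOp 4) (j + 1)) ⧸
            (dPow (dihedralOp 4) (j + 2)).addSubgroupOf (dPow (dihedralOp 4) (j + 1))) ≃+
          (ZMod 2 × ZMod 2)) := by
  intro e₁ e₂ e₃
  refine ⟨⟨?_, ?_⟩, fun j => ⟨?_, ?_⟩⟩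
  · exact dpow1
  · exact iso1
  · exact dpow_eq j
  · exact iso2 j
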